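/- arXiv:1303.1916 — 2 statements merged into one kernel-verified Lean document; each statement's English description precedes it below -/
import Mathlib

section
/- Let $V$ be a $\cor$-module with an endomorphism $e_i$ for each $i \in I$ and set $\varepsilon_i(v) = \min\{n \ge 0 : e_i^{n+1}v = 0\}$ (with $\varepsilon_i(0) = -\infty$), assuming each $e_i$ acts locally nilpotently. Fix a finite sequence $\mathbf{i} = (i_1, \dots, i_m)$ and define the preorder $\preceq_{\mathbf{i}}$ on $V \setminus \{0\}$ lexicographically: $v \preceq_{(i)} v'$ iff $\varepsilon_i(v) \le \varepsilon_i(v')$, and $v \preceq_{(i;\mathbf{i}')} v'$ iff $\varepsilon_i(v) < \varepsilon_i(v')$, or $\varepsilon_i(v) = \varepsilon_i(v')$ and $e_i^{\varepsilon_i(v)}v \preceq_{\mathbf{i}'} e_i^{\varepsilon_i(v')}v'$. Then for every nonzero $v \in V$, the set $V^{\prec_{\mathbf{i}} v} = \{0\} \cup \{v' \ne 0 : v' \prec_{\mathbf{i}} v\}$ is a $\cor$-submodule of $V$, where $v' \prec_{\mathbf{i}} v$ means $v' \preceq_{\mathbf{i}} v$ but not $v \preceq_{\mathbf{i}} v'$.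 -/
/-- `ε_i(v) = min {n ≥ 0 | e^(n+1) v = 0}` for a locally nilpotent operator `e`. -/
noncomputable def epsNum {k V : Type*} [Field k] [AddCommGroup V] [Module k V]
    (e : Module.End k V) (v : V) : ℕ :=
  sInf {n : ℕ | (e ^ (n + 1)) v = 0}

/-- The lexicographic preorder `≼_𝐢` on nonzero vectors attached to a sequence `𝐢` of
indices: compare `ε_{i₁}`, then recursively compare the top terms `e_{i₁}^{ε_{i₁}(v)} v`. -/
def lexPre {k V : Type*} [Field k] [AddCommGroup V] [Module k V] {I : Type*}
    (e : I → Module.End k V) : List I → V → V → Prop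
  | [], _, _ => True
  | i :: is, v, v' =>
      epsNum (e i) v < epsNum (e i) v' ∨
      (epsNum (e i) v = epsNum (e i) v' ∧
        lexPre e is (((e i) ^ epsNum (e i) v) v) (((e i) ^ epsNum (e i) v') v'))

section Aux

variable {k V : Type*} [Field k] [AddCommGroup V] [Module k V]

lemma eps_spec (e : Module.End k V) (he : ∀ w : V, ∃ n : ℕ, (e ^ n) w = 0) (v : V) :
    (e ^ (epsNum e v + 1)) v = 0 := by
  obtain ⟨m, hm⟩ := he v
  have hmem : m ∈ {n : ℕ | (e ^ (n + 1)) v = 0} := by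
    show (e ^ (m + 1)) v = 0
    rw [pow_succ', Module.End.mul_apply, hm, map_zero]
  exact Nat.sInf_mem ⟨m, hmem⟩

lemma eps_le {e : Module.End k V} {v : V} {n : ℕ} (h : (e ^ (n + 1)) v = 0) :
    epsNum e v ≤ n := Nat.sInf_le h

lemma eps_le_iff (e : Module.End k V) (he : ∀ w : V, ∃ n : ℕ, (e ^ n) w = 0) (v : V) (n : ℕ) :
    epsNum e v ≤ n ↔ (e ^ (n + 1)) v = 0 := by
  constructor
  · intro h
    have h0 := eps_spec e he v
    have hsplit : n + 1 = (n - epsNum e v) + (epsNum e v + 1) := by omega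
    rw [hsplit, pow_add, Module.End.mul_apply, h0, map_zero]
  · exact eps_le

lemma pow_eps_ne (e : Module.End k V) (he : ∀ w : V, ∃ n : ℕ, (e ^ n) w = 0) {v : V}
    (hv : v ≠ 0) : (e ^ epsNum e v) v ≠ 0 := by
  intro h
  rcases Nat.eq_zero_or_pos (epsNum e v) with h0 | h0
  · rw [h0, pow_zero, Module.End.one_apply] at h
    exact hv h
  · have : epsNum e v ≤ epsNum e v - 1 := eps_le (by
      have : epsNum e v - 1 + 1 = epsNum e v := by omega
      rw [this, h])
    omega

lemma eps_smul (e : Module.End k V) {c : k} (hc : c ≠ 0) (v : V) :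
    epsNum e (c • v) = epsNum e v := by
  unfold epsNum
  congr 1
  ext n
  simp [map_smul, smul_eq_zero, hc]

variable {I : Type*}

lemma lexPre_total (e : I → Module.End k V) (l : List I) :
    ∀ a b : V, lexPre e l a b ∨ lexPre e l b a := by
  induction l with
  | nil => intro a b; left; trivial
  | cons i is ih =>
    intro a b
    rcases lt_trichotomy (epsNum (e i) a) (epsNum (e i) b) with h | h | h
    · exact Or.inl (Or.inl h)
    · rcases ih (((e i) ^ epsNum (e i) a) a) (((e i) ^ epsNum (e i) b) b) with h' | h'
      · exact Or.inl (Or.inr ⟨h, h'⟩)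
      · exact Or.inr (Or.inr ⟨h.symm, h'⟩)
    · exact Or.inr (Or.inl h)

lemma lexPre_smul_left (e : I → Module.End k V) (l : List I) {c : k} (hc : c ≠ 0) (a b : V) :
    lexPre e l (c • a) b ↔ lexPre e l a b := by
  induction l generalizing a b with
  | nil => simp [lexPre]
  | cons i is ih =>
    show _ ∨ _ ↔ _ ∨ _
    rw [eps_smul (e i) hc, map_smul, ih]

lemma lexPre_smul_right (e : I → Module.End k V) (l : List I) {c : k} (hc : c ≠ 0) (a b : V) :
    lexPre e l a (c • b) ↔ lexPre e l a b := by
  induction l generalizing a b with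
  | nil => simp [lexPre]
  | cons i is ih =>
    show _ ∨ _ ↔ _ ∨ _
    rw [eps_smul (e i) hc, map_smul, ih]

lemma key_add (e : I → Module.End k V)
    (hnil : ∀ (i : I) (v : V), ∃ n : ℕ, ((e i) ^ n) v = 0) :
    ∀ (l : List I) (v : V), v ≠ 0 → ∀ x y : V,
      (x = 0 ∨ ¬ lexPre e l v x) → (y = 0 ∨ ¬ lexPre e l v y) →
      (x + y = 0 ∨ ¬ lexPre e l v (x + y)) := by
  intro l
  induction l with
  | nil =>
    intro v hv x y hx hy
    left
    rcases hx with hx | hx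
    · rcases hy with hy | hy
      · rw [hx, hy, add_zero]
      · exact absurd trivial hy
    · exact absurd trivial hx
  | cons i is ih =>
    intro v hv x y hx hy
    rcases eq_or_ne x 0 with rfl | hx0
    · simpa using hy
    rcases eq_or_ne y 0 with rfl | hy0
    · simpa using hx
    rcases eq_or_ne (x + y) 0 with hxy | hxy
    · exact Or.inl hxy
    right
    have hx' : ¬ lexPre e (i :: is) v x := hx.resolve_left hx0
    have hy' : ¬ lexPre e (i :: is) v y := hy.resolve_left hy0
    have hE' : ∀ w : V, ∃ m : ℕ, ((e i) ^ m) w = 0 := hnil i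
    have hxle : epsNum (e i) x ≤ epsNum (e i) v := by
      by_contra h
      exact hx' (Or.inl (by omega))
    have hyle : epsNum (e i) y ≤ epsNum (e i) v := by
      by_contra h
      exact hy' (Or.inl (by omega))
    have hxy_le : epsNum (e i) (x + y) ≤ epsNum (e i) v := by
      rw [eps_le_iff (e i) hE']
      have h1 : ((e i) ^ (epsNum (e i) v + 1)) x = 0 := (eps_le_iff (e i) hE' x _).mp hxle
      have h2 : ((e i) ^ (epsNum (e i) v + 1)) y = 0 := (eps_le_iff (e i) hE' y _).mp hyle
      rw [map_add, h1, h2, add_zero]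
    intro hcon
    rcases hcon with hlt | ⟨heq, hrec⟩
    · omega
    have heq' : epsNum (e i) (x + y) = epsNum (e i) v := heq.symm
    have hvtop : ((e i) ^ epsNum (e i) v) v ≠ 0 := pow_eps_ne (e i) hE' hv
    have hmem : ∀ w : V, w ≠ 0 → epsNum (e i) w ≤ epsNum (e i) v →
        ¬ lexPre e (i :: is) v w →
        (((e i) ^ epsNum (e i) v) w = 0 ∨
          ¬ lexPre e is (((e i) ^ epsNum (e i) v) v) (((e i) ^ epsNum (e i) v) w)) := by
      intro w hw0 hwle hw
      rcases lt_or_eq_of_le hwle with hltw | heqw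
      · left
        have h0 : ((e i) ^ (epsNum (e i) w + 1)) w = 0 := eps_spec (e i) hE' w
        have hsplit : epsNum (e i) v = (epsNum (e i) v - (epsNum (e i) w + 1)) +
            (epsNum (e i) w + 1) := by omega
        rw [hsplit, pow_add, Module.End.mul_apply, h0, map_zero]
      · right
        intro hrec'
        apply hw
        right
        refine ⟨heqw.symm, ?_⟩
        rw [heqw]
        exact hrec'
    have hxm := hmem x hx0 hxle hx'
    have hym := hmem y hy0 hyle hy'
    have hsum := ih (((e i) ^ epsNum (e i) v) v) hvtop _ _ hxm hym
    rw [← map_add] at hsum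
    rw [heq'] at hrec
    rcases hsum with hzero | hnl
    · have hne := pow_eps_ne (e i) hE' hxy
      rw [heq'] at hne
      exact hne hzero
    · exact hnl hrec

end Aux

/-- For every nonzero `v`, the set `V^{≺_𝐢 v} = {0} ∪ {v' ≠ 0 | v' ≺_𝐢 v}` is a
submodule of `V`, where `v' ≺_𝐢 v` means `v' ≼_𝐢 v` but not `v ≼_𝐢 v'`. -/
theorem lexPre_strict_submodule {k V : Type*} [Field k] [AddCommGroup V] [Module k V]
    {I : Type*} (e : I → Module.End k V)
    (hnil : ∀ (i : I) (v : V), ∃ n : ℕ, ((e i) ^ n) v = 0)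
    (l : List I) (v : V) (hv : v ≠ 0) :
    ∃ W : Submodule k V, ∀ x : V,
      x ∈ W ↔ x = 0 ∨ (x ≠ 0 ∧ lexPre e l x v ∧ ¬ lexPre e l v x) := by
  refine ⟨{
    carrier := {x | x = 0 ∨ ¬ lexPre e l v x}
    add_mem' := by
      intro a b ha hb
      exact key_add e hnil l v hv a b ha hb
    zero_mem' := Or.inl rfl
    smul_mem' := by
      intro c x hx
      rcases eq_or_ne c 0 with rfl | hc
      · left; simp
      rcases hx with rfl | hx
      · left; simp
      · right
        rw [lexPre_smul_right e l hc]
        exact hx }, ?_⟩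
  intro x
  constructor
  · intro hx
    rcases hx with rfl | hx
    · exact Or.inl rfl
    · rcases eq_or_ne x 0 with rfl | hx0
      · exact Or.inl rfl
      · exact Or.inr ⟨hx0, (lexPre_total e l x v).resolve_right hx, hx⟩
  · rintro (rfl | ⟨hx0, _, hx⟩)
    · exact Or.inl rfl
    · exact Or.inr hx
end

section
/- Let $V$ be an integrable module over $U_q(\mathfrak{sl}_2)$ (quantum parameter not a root of unity, base field), $\varphi$ a linear endomorphism of $V$ of weight $\mu$ with $\langle h, \mu \rangle < 0$, such that $e\varphi = c\, \varphi e$ for some nonzero scalar $c$. Then $\varphi = 0$. -/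
/-!
On an integrable weight module, `E ^ N` maps `W (-N)` onto `W N`: for a highest weight vector
`v ∈ W N` one has `E ^ N (F ^ N v) = ∏ i < N, [i + 1] [N - i] • v`, and induction on the
`E`-nilpotency order handles the rest. Dually, `E ^ m` is injective on `W n` when `n + m ≤ 0`:
by induction on the `F`-nilpotency order this reduces to lowest weight vectors, where the same
formula with `E` and `F` exchanged applies.

If now `φ (E v) = 0` for some `v ∈ W N`, write `v = E ^ N u` with `u ∈ W (-N)`. Then
`E ^ (N + 1) (φ u) = c ^ (N + 1) • φ (E v) = 0`, while `φ u` has weight `μ - N ≤ -(N + 1)`;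
so `φ u = 0` and `c ^ N • φ v = E ^ N (φ u) = 0`. Induction on the `E`-nilpotency order of `v`
shows that `φ` kills every weight space.
-/

open Finset

section
variable {k : Type*} [Field k]

/-- The quantum integer `[n]_q`. -/
noncomputable def qInt (q : kˣ) (n : ℤ) : k :=
  (((q ^ n : kˣ) : k) - ((q ^ (-n) : kˣ) : k)) / ((q : k) - ((q⁻¹ : kˣ) : k))

theorem qInt_neg (q : kˣ) (n : ℤ) : qInt q (-n) = -qInt q n := by
  rw [qInt, qInt, neg_neg, ← neg_div, neg_sub]

theorem val_zpow_sub_val_zpow_neg_ne_zero {q : kˣ} (hq : ¬IsOfFinOrder q) {n : ℤ} (hn : n ≠ 0) :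
    ((q ^ n : kˣ) : k) - ((q ^ (-n) : kˣ) : k) ≠ 0 := by
  rw [sub_ne_zero, Ne, Units.val_inj]
  intro h
  refine hq (isOfFinOrder_iff_zpow_eq_one.mpr ⟨n + n, by omega, ?_⟩)
  rw [zpow_add]
  exact mul_eq_one_iff_eq_inv.mpr (h.trans (zpow_neg q n))

theorem val_sub_val_inv_ne_zero {q : kˣ} (hq : ¬IsOfFinOrder q) :
    (q : k) - ((q⁻¹ : kˣ) : k) ≠ 0 := by
  simpa using val_zpow_sub_val_zpow_neg_ne_zero hq (one_ne_zero (α := ℤ))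

theorem qInt_ne_zero {q : kˣ} (hq : ¬IsOfFinOrder q) {n : ℤ} (hn : n ≠ 0) : qInt q n ≠ 0 :=
  div_ne_zero (val_zpow_sub_val_zpow_neg_ne_zero hq hn) (val_sub_val_inv_ne_zero hq)

theorem qInt_one {q : kˣ} (hq : ¬IsOfFinOrder q) : qInt q 1 = 1 := by
  rw [qInt, zpow_one, zpow_neg, zpow_one, div_self (val_sub_val_inv_ne_zero hq)]

theorem prod_qInt_ne_zero {q : kˣ} (hq : ¬IsOfFinOrder q) {n : ℤ} {m : ℕ} (hm : m ≤ n) :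
    ∏ i ∈ range m, qInt q (i + 1) * qInt q (n - i) ≠ 0 :=
  prod_ne_zero_iff.mpr fun i hi ↦ by
    have := mem_range.mp hi
    exact mul_ne_zero (qInt_ne_zero hq (by omega)) (qInt_ne_zero hq (by omega))

theorem qInt_add_one_mul_add_qInt (q : kˣ) (j n : ℤ) :
    qInt q (j + 1) * qInt q (n - j) + qInt q (n - 2 * j - 2)
      = qInt q (j + 2) * qInt q (n - j - 1) := by
  have hQ : (q : k) ≠ 0 := q.ne_zero
  by_cases hd : (q : k) - ((q⁻¹ : kˣ) : k) = 0
  · simp only [qInt, hd, div_zero, mul_zero, add_zero]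
  simp only [qInt, Units.val_zpow_eq_zpow_val, Units.val_inv_eq_inv_val, two_mul, neg_add,
    neg_sub, zpow_add₀ hQ, zpow_sub₀ hQ, zpow_neg, zpow_one, zpow_two] at hd ⊢
  field_simp
  ring

section Module
variable {V : Type*} [AddCommGroup V] [Module k V]

theorem pow_apply_mem {W : ℤ → Submodule k V} {T : Module.End k V} {d : ℤ}
    (hT : ∀ n, ∀ v ∈ W n, T v ∈ W (n + d)) (m : ℕ) {n : ℤ} {v : V} (hv : v ∈ W n) :
    (T ^ m) v ∈ W (n + m * d) := by
  induction m with
  | zero => simpa using hv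
  | succ m ih =>
    rw [pow_succ', Module.End.mul_apply, Nat.cast_succ, add_one_mul, ← add_assoc]
    exact hT _ _ ih

theorem pow_mul_eq_smul_mul_pow {E φ : Module.End k V} {c : k} (hcom : E * φ = c • (φ * E))
    (m : ℕ) : E ^ m * φ = c ^ m • (φ * E ^ m) := by
  induction m with
  | zero => simp
  | succ m ih =>
    rw [pow_succ', mul_assoc, ih, mul_smul_comm, ← mul_assoc, hcom, smul_mul_assoc, smul_smul,
      mul_assoc, ← pow_succ]

/-- The relations of `U_q(sl₂)` on a weight module: `K` acts on `W n` by `q ^ n`, so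
`[E, F] = (K - K⁻¹) / (q - q⁻¹)` acts there by `[n]_q`. -/
structure IsUqsl2Module (q : kˣ) (W : ℤ → Submodule k V) (E F : Module.End k V) : Prop where
  E_mem : ∀ n, ∀ v ∈ W n, E v ∈ W (n + 2)
  F_mem : ∀ n, ∀ v ∈ W n, F v ∈ W (n - 2)
  E_F_sub_F_E : ∀ n, ∀ v ∈ W n, E (F v) - F (E v) = qInt q n • v

namespace IsUqsl2Module
variable {q : kˣ} {W : ℤ → Submodule k V} {E F : Module.End k V} (h : IsUqsl2Module q W E F)
include h

theorem swap : IsUqsl2Module q (fun n ↦ W (-n)) F E where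
  E_mem n v hv := by convert h.F_mem _ v hv using 2; ring
  F_mem n v hv := by convert h.E_mem _ v hv using 2; ring
  E_F_sub_F_E n v hv := by rw [← neg_sub, h.E_F_sub_F_E _ v hv, qInt_neg, neg_smul, neg_neg]

theorem pow_E_mem (m : ℕ) {n : ℤ} {v : V} (hv : v ∈ W n) : (E ^ m) v ∈ W (n + 2 * m) := by
  simpa [mul_comm] using pow_apply_mem h.E_mem m hv

theorem pow_F_mem (m : ℕ) {n : ℤ} {v : V} (hv : v ∈ W n) : (F ^ m) v ∈ W (n - 2 * m) := by
  convert h.swap.pow_E_mem m (n := -n) (by simpa using hv) using 2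
  ring

theorem E_pow_F_succ (hq : ¬IsOfFinOrder q) {n : ℤ} {v : V} (hv : v ∈ W n) (hEv : E v = 0)
    (j : ℕ) : E ((F ^ (j + 1)) v) = (qInt q (j + 1) * qInt q (n - j)) • (F ^ j) v := by
  induction j with
  | zero =>
    have hcomm := h.E_F_sub_F_E n v hv
    rw [hEv, map_zero, sub_zero] at hcomm
    simp [hcomm, qInt_one hq]
  | succ j ih =>
    have hcomm := h.E_F_sub_F_E _ _ (h.pow_F_mem (j + 1) hv)
    rw [sub_eq_iff_eq_add'] at hcomm
    rw [pow_succ' F (j + 1), Module.End.mul_apply, hcomm, ih, map_smul, ← Module.End.mul_apply,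
      ← pow_succ', ← add_smul]
    congr 1
    push_cast
    convert qInt_add_one_mul_add_qInt q j n using 3 <;> ring

theorem pow_E_pow_F (hq : ¬IsOfFinOrder q) {n : ℤ} {v : V} (hv : v ∈ W n) (hEv : E v = 0)
    (m : ℕ) : (E ^ m) ((F ^ m) v) = (∏ i ∈ range m, qInt q (i + 1) * qInt q (n - i)) • v := by
  induction m with
  | zero => simp
  | succ m ih =>
    rw [pow_succ, Module.End.mul_apply, h.E_pow_F_succ hq hv hEv, map_smul, ih, smul_smul,
      prod_range_succ, mul_comm]

theorem exists_pow_E_eq_of_E_eq_zero (hq : ¬IsOfFinOrder q) {N : ℕ} {v : V} (hv : v ∈ W N)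
    (hEv : E v = 0) : ∃ u ∈ W (-N), (E ^ N) u = v := by
  refine ⟨(∏ i ∈ range N, qInt q (i + 1) * qInt q (N - i))⁻¹ • (F ^ N) v,
    Submodule.smul_mem _ _ ?_, ?_⟩
  · convert h.pow_F_mem N hv using 2
    ring
  · rw [map_smul, h.pow_E_pow_F hq hv hEv, smul_smul,
      inv_mul_cancel₀ (prod_qInt_ne_zero hq le_rfl), one_smul]

theorem eq_zero_of_F_eq_zero (hq : ¬IsOfFinOrder q) {n : ℤ} {m : ℕ} (hm : n + m ≤ 0) {v : V}
    (hv : v ∈ W n) (hFv : F v = 0) (hEv : (E ^ m) v = 0) : v = 0 := by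
  have hprod := h.swap.pow_E_pow_F hq (n := -n) (by simpa using hv) hFv m
  rw [hEv, map_zero] at hprod
  exact (smul_eq_zero.mp hprod.symm).resolve_left (prod_qInt_ne_zero hq (by omega))

theorem exists_pow_E_succ_F {n : ℤ} {v : V} (hv : v ∈ W n) (m : ℕ) :
    ∃ s : k, (E ^ (m + 1)) (F v) = F ((E ^ (m + 1)) v) + s • (E ^ m) v := by
  induction m generalizing n v with
  | zero => exact ⟨qInt q n, by simpa [sub_eq_iff_eq_add'] using h.E_F_sub_F_E n v hv⟩
  | succ m ih =>
    obtain ⟨s, hs⟩ := ih (h.E_mem n v hv)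
    have hcomm := h.E_F_sub_F_E n v hv
    rw [sub_eq_iff_eq_add'] at hcomm
    refine ⟨s + qInt q n, ?_⟩
    simp only [pow_succ, Module.End.mul_apply] at hs ⊢
    rw [hcomm, map_add, map_add, hs, map_smul, map_smul, add_smul, add_assoc]

theorem eq_zero_of_pow_E_eq_zero (hq : ¬IsOfFinOrder q) {d : ℕ} {v : V} (hFv : (F ^ d) v = 0)
    {n : ℤ} {m : ℕ} (hm : n + m ≤ 0) (hv : v ∈ W n) (hEv : (E ^ m) v = 0) : v = 0 := by
  induction d generalizing n m v with
  | zero => simpa using hFv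
  | succ d ih =>
    rw [pow_succ, Module.End.mul_apply] at hFv
    obtain ⟨s, hs⟩ := h.exists_pow_E_succ_F hv m
    refine h.eq_zero_of_F_eq_zero hq hm hv (ih hFv (m := m + 1) (by omega) (h.F_mem n v hv) ?_) hEv
    rw [hs, pow_succ', Module.End.mul_apply, hEv, map_zero, map_zero, smul_zero, add_zero]

theorem exists_pow_E_eq (hq : ¬IsOfFinOrder q) {m : ℕ} {v : V} (hEv : (E ^ m) v = 0) {N : ℕ}
    (hv : v ∈ W N) : ∃ u ∈ W (-N), (E ^ N) u = v := by
  induction m generalizing N v with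
  | zero => exact ⟨0, Submodule.zero_mem _, by simpa using hEv.symm⟩
  | succ m ih =>
    rw [pow_succ, Module.End.mul_apply] at hEv
    obtain ⟨u, hu, hEu⟩ := ih hEv (N := N + 2) (by exact_mod_cast h.E_mem _ v hv)
    have hw : v - (E ^ (N + 1)) u ∈ W N :=
      Submodule.sub_mem _ hv (by convert h.pow_E_mem (N + 1) hu using 2; push_cast; ring)
    obtain ⟨u₀, hu₀, hEu₀⟩ := h.exists_pow_E_eq_of_E_eq_zero hq hw
      (by rw [map_sub, ← Module.End.mul_apply, ← pow_succ', hEu, sub_self])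
    refine ⟨u₀ + E u, Submodule.add_mem _ hu₀ (by convert h.E_mem _ u hu using 2; push_cast; ring),
      ?_⟩
    rw [map_add, hEu₀, ← Module.End.mul_apply, ← pow_succ, sub_add_cancel]

theorem apply_eq_zero_of_apply_E_eq_zero (hq : ¬IsOfFinOrder q) (hFnil : ∀ v : V, ∃ m : ℕ, (F ^ m) v = 0)
    {μ : ℤ} (hμ : μ < 0) {φ : Module.End k V} (hφ : ∀ n, ∀ v ∈ W n, φ v ∈ W (n + μ))
    {c : k} (hc : c ≠ 0) (hcom : E * φ = c • (φ * E))
    {n : ℤ} {m : ℕ} {v : V} (hv : v ∈ W n) (hEv : (E ^ m) v = 0) (hφE : φ (E v) = 0) :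
    φ v = 0 := by
  have hpow (m : ℕ) (x : V) : (E ^ m) (φ x) = c ^ m • φ ((E ^ m) x) :=
    LinearMap.congr_fun (pow_mul_eq_smul_mul_pow hcom m) x
  rcases lt_or_ge n 0 with hn | hn
  · obtain ⟨d, hd⟩ := hFnil (φ v)
    exact h.eq_zero_of_pow_E_eq_zero hq hd (m := 1) (by omega) (hφ n v hv)
      (by rw [hpow, pow_one, pow_one, hφE, smul_zero])
  · lift n to ℕ using hn
    obtain ⟨u, hu, rfl⟩ := h.exists_pow_E_eq hq hEv hv
    obtain ⟨d, hd⟩ := hFnil (φ u)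
    have hφu : φ u = 0 := h.eq_zero_of_pow_E_eq_zero hq hd (m := n + 1) (by omega) (hφ _ u hu)
      (by rw [hpow, pow_succ' E, Module.End.mul_apply, hφE, smul_zero])
    have hpowu := hpow n u
    rw [hφu, map_zero] at hpowu
    exact (smul_eq_zero.mp hpowu.symm).resolve_left (pow_ne_zero n hc)

theorem eq_zero_of_mul_eq_smul_mul (hq : ¬IsOfFinOrder q) (hW : DirectSum.IsInternal W)
    (hEnil : ∀ v : V, ∃ m : ℕ, (E ^ m) v = 0) (hFnil : ∀ v : V, ∃ m : ℕ, (F ^ m) v = 0)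
    {μ : ℤ} (hμ : μ < 0) {φ : Module.End k V} (hφ : ∀ n, ∀ v ∈ W n, φ v ∈ W (n + μ))
    {c : k} (hc : c ≠ 0) (hcom : E * φ = c • (φ * E)) : φ = 0 := by
  have hker (m : ℕ) : ∀ n, ∀ v ∈ W n, (E ^ m) v = 0 → φ v = 0 := by
    induction m with
    | zero => intro n v _ hv0; rw [show v = 0 by simpa using hv0, map_zero]
    | succ m ih =>
      intro n v hv hEv
      refine h.apply_eq_zero_of_apply_E_eq_zero hq hFnil hμ hφ hc hcom hv hEv ?_
      rw [pow_succ, Module.End.mul_apply] at hEv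
      exact ih _ _ (h.E_mem n v hv) hEv
  refine LinearMap.ker_eq_top.mp (top_unique ?_)
  rw [← hW.submodule_iSup_eq_top]
  exact iSup_le fun n v hv ↦ (hEnil v).elim fun m ↦ hker m n v hv

end IsUqsl2Module
end Module
end

/-- Let `V` be an integrable `U_q(sl₂)`-module over a field `k` with `q` not a root of
unity: `V` has a weight space decomposition `V = ⊕_{n ∈ ℤ} W n` with `E`, `F` shifting
weights by `±2`, satisfying the `sl₂` commutation relation
`[E, F] = (Kⁿ - K⁻ⁿ)/(q - q⁻¹)` on `W n` and acting locally nilpotently.  If `φ` is a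
linear endomorphism of `V` of weight `μ < 0` such that `E ∘ φ = c · (φ ∘ E)` for some
nonzero scalar `c`, then `φ = 0`. -/
theorem weight_endo_vanishes {k : Type*} [Field k] {V : Type*} [AddCommGroup V] [Module k V]
    (q : kˣ) (hq : ∀ n : ℕ, 0 < n → (q : k) ^ n ≠ 1)
    (W : ℤ → Submodule k V) (hW : DirectSum.IsInternal W)
    (E F : Module.End k V)
    (hE : ∀ n : ℤ, ∀ v ∈ W n, E v ∈ W (n + 2))
    (hF : ∀ n : ℤ, ∀ v ∈ W n, F v ∈ W (n - 2))
    (hEF : ∀ n : ℤ, ∀ v ∈ W n,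
      ((q : k) - ((q⁻¹ : kˣ) : k)) • (E (F v) - F (E v))
        = (((q ^ n : kˣ) : k) - ((q ^ (-n) : kˣ) : k)) • v)
    (hEnil : ∀ v : V, ∃ m : ℕ, (E ^ m) v = 0)
    (hFnil : ∀ v : V, ∃ m : ℕ, (F ^ m) v = 0)
    (μ : ℤ) (hμ : μ < 0) (φ : Module.End k V)
    (hφ : ∀ n : ℤ, ∀ v ∈ W n, φ v ∈ W (n + μ))
    (c : k) (hc : c ≠ 0)
    (hcom : ∀ v : V, E (φ v) = c • φ (E v)) :
    φ = 0 := by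
  have hq' : ¬IsOfFinOrder q := fun hfin ↦
    let ⟨n, hn, hqn⟩ := isOfFinOrder_iff_pow_eq_one.mp hfin
    hq n hn (by rw [← Units.val_pow_eq_pow_val, hqn, Units.val_one])
  have hmod : IsUqsl2Module q W E F := ⟨hE, hF, fun n v hv ↦ by
    rw [qInt, div_eq_inv_mul, mul_smul, ← hEF n v hv, smul_smul,
      inv_mul_cancel₀ (val_sub_val_inv_ne_zero hq'), one_smul]⟩
  exact hmod.eq_zero_of_mul_eq_smul_mul hq' hW hEnil hFnil hμ hφ hc (LinearMap.ext hcom)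
end
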